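/- For every t > 0 and every x ∈ ℝ², ∫_{ℝ²} p_t(y) · | log|y − x| | dy ≤ 1/t + |x| + ∫_{ℝ²} p_t(y) |y| dy; consequently limsup_{x → 0} ∫_{ℝ²} p_t(y) | log|y − x| | dy < ∞. -/

import Mathlib

open Filter

/-- Transition density of `d`-dimensional Brownian motion. -/
noncomputable def p (d : ℕ) (t : ℝ) (y : EuclideanSpace ℝ (Fin d)) : ℝ :=
  (2 * Real.pi * t) ^ (-(d : ℝ) / 2) * Real.exp (-‖y‖ ^ 2 / (2 * t))

/-!
Split `|log r| = log⁺ r + log⁺ r⁻¹`. The first part is at most `r ≤ ‖y‖ + ‖x‖` for `r = ‖y - x‖`,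
which integrates against the probability density `p 2 t` to `‖x‖ + ∫ p 2 t y * ‖y‖`. For the
second, bound `p 2 t` by its maximum `(2πt)⁻¹`; by translation invariance and polar coordinates,
`∫ log⁺ ‖z‖⁻¹ dz = 2π ∫₀¹ r (-log r) dr = π / 2`, so this part contributes at most `1 / (4t)`.
-/

open Real MeasureTheory Set Metric

lemma abs_log_eq_posLog_add_posLog_inv (x : ℝ) : |log x| = log⁺ x + log⁺ x⁻¹ := by
  rw [posLog_apply, posLog_apply, log_inv, max_comm, max_comm 0,
    max_zero_add_max_neg_zero_eq_abs_self]

lemma posLog_le_self {x : ℝ} (hx : 0 ≤ x) : log⁺ x ≤ x :=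
  max_le hx (log_le_self hx)

lemma abs_log_norm_sub_le {E : Type*} [SeminormedAddCommGroup E] (x y : E) :
    |log ‖y - x‖| ≤ log⁺ ‖y - x‖⁻¹ + (‖y‖ + ‖x‖) := by
  rw [abs_log_eq_posLog_add_posLog_inv, add_comm]
  gcongr
  exact (posLog_le_self (norm_nonneg _)).trans (norm_sub_le y x)

theorem integral_mul_abs_log_norm_sub_le {E : Type*} [NormedAddCommGroup E] [MeasurableSpace E]
    [MeasurableAdd E] {μ : Measure E} [μ.IsAddRightInvariant]
    (hlog : Integrable (fun z : E => log⁺ ‖z‖⁻¹) μ) {f : E → ℝ} {M : ℝ}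
    (hf_nonneg : ∀ y, 0 ≤ f y) (hf_le : ∀ y, f y ≤ M) (hf : Integrable f μ)
    (hf_norm : Integrable (fun y => f y * ‖y‖) μ) (hf_one : ∫ y, f y ∂μ = 1) (x : E) :
    ∫ y, f y * |log ‖y - x‖| ∂μ ≤ M * ∫ z, log⁺ ‖z‖⁻¹ ∂μ + ‖x‖ + ∫ y, f y * ‖y‖ ∂μ := by
  have hlog_x : Integrable (fun y => M * log⁺ ‖y - x‖⁻¹) μ := (hlog.comp_sub_right x).const_mul M
  have hmoment : Integrable (fun y => f y * ‖y‖ + f y * ‖x‖) μ := hf_norm.add (hf.mul_const _)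
  have hpointwise (y : E) :
      f y * |log ‖y - x‖| ≤ M * log⁺ ‖y - x‖⁻¹ + (f y * ‖y‖ + f y * ‖x‖) :=
    calc f y * |log ‖y - x‖| ≤ f y * (log⁺ ‖y - x‖⁻¹ + (‖y‖ + ‖x‖)) :=
          mul_le_mul_of_nonneg_left (abs_log_norm_sub_le x y) (hf_nonneg y)
      _ ≤ M * log⁺ ‖y - x‖⁻¹ + (f y * ‖y‖ + f y * ‖x‖) := by
          rw [mul_add, mul_add]
          gcongr
          · exact posLog_nonneg
          · exact hf_le y
  calc ∫ y, f y * |log ‖y - x‖| ∂μ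
      ≤ ∫ y, M * log⁺ ‖y - x‖⁻¹ + (f y * ‖y‖ + f y * ‖x‖) ∂μ :=
        integral_mono_of_nonneg (.of_forall fun y => mul_nonneg (hf_nonneg y) (abs_nonneg _))
          (hlog_x.add hmoment) (.of_forall hpointwise)
    _ = M * ∫ z, log⁺ ‖z‖⁻¹ ∂μ + ‖x‖ + ∫ y, f y * ‖y‖ ∂μ := by
        rw [integral_add hlog_x hmoment, integral_add hf_norm (hf.mul_const _), integral_const_mul,
          integral_sub_right_eq_self (fun z => log⁺ ‖z‖⁻¹) x, integral_mul_const, hf_one]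
        ring

lemma continuous_pow_succ_mul_inv_sub_log_div (m : ℕ) :
    Continuous fun r : ℝ => r ^ (m + 1) * ((m + 1 : ℝ)⁻¹ - log r) / (m + 1) := by
  have h : (fun r : ℝ => r ^ (m + 1) * ((m + 1 : ℝ)⁻¹ - log r) / (m + 1)) =
      fun r => (r ^ (m + 1) * (m + 1 : ℝ)⁻¹ - r ^ m * (r * log r)) / (m + 1) := by
    ext r
    ring
  rw [h]
  have := continuous_mul_log
  fun_prop

lemma hasDerivAt_pow_succ_mul_inv_sub_log_div (m : ℕ) {r : ℝ} (hr : r ≠ 0) :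
    HasDerivAt (fun r : ℝ => r ^ (m + 1) * ((m + 1 : ℝ)⁻¹ - log r) / (m + 1))
      (r ^ m * -log r) r := by
  have h := ((hasDerivAt_pow (m + 1) r).mul
    ((hasDerivAt_log hr).const_sub (m + 1 : ℝ)⁻¹)).div_const (m + 1 : ℝ)
  refine h.congr_deriv ?_
  push_cast
  field_simp
  ring

lemma integrableOn_pow_mul_neg_log (m : ℕ) :
    IntegrableOn (fun r : ℝ => r ^ m * -log r) (Ioc 0 1) :=
  intervalIntegral.integrableOn_deriv_of_nonneg
    (continuous_pow_succ_mul_inv_sub_log_div m).continuousOn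
    (fun _ hr => hasDerivAt_pow_succ_mul_inv_sub_log_div m hr.1.ne')
    (fun _ hr => mul_nonneg (pow_nonneg hr.1.le m) (neg_nonneg.2 (log_nonpos hr.1.le hr.2.le)))

lemma integral_pow_mul_neg_log (m : ℕ) :
    ∫ r in (0 : ℝ)..1, r ^ m * -log r = 1 / (m + 1) ^ 2 := by
  rw [intervalIntegral.integral_eq_sub_of_hasDerivAt_of_le zero_le_one
    (continuous_pow_succ_mul_inv_sub_log_div m).continuousOn
    (fun _ hr => hasDerivAt_pow_succ_mul_inv_sub_log_div m hr.1.ne')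
    ((intervalIntegrable_iff_integrableOn_Ioc_of_le zero_le_one).2
      (integrableOn_pow_mul_neg_log m))]
  simp only [one_pow, log_one, sub_zero, one_mul, ne_eq, Nat.add_eq_zero_iff, one_ne_zero,
    and_false, not_false_eq_true, zero_pow, log_zero, zero_mul, zero_div, one_div]
  field_simp

lemma posLog_inv_eq_neg_log {r : ℝ} (hr : r ∈ Ioc (0 : ℝ) 1) : log⁺ r⁻¹ = -log r := by
  rw [posLog_eq_log (by rw [abs_inv, abs_of_pos hr.1]; exact one_le_inv_iff₀.2 hr), log_inv]

lemma posLog_inv_eq_zero_of_one_le {r : ℝ} (hr : 1 ≤ r) : log⁺ r⁻¹ = 0 := by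
  rw [posLog_eq_zero_iff, abs_inv, abs_of_pos (zero_lt_one.trans_le hr)]
  exact inv_le_one_of_one_le₀ hr

lemma pow_mul_posLog_inv_eq_zero {m : ℕ} {r : ℝ} (hr : r ∈ Ioi 0 \ Ioc 0 1) :
    r ^ m * log⁺ r⁻¹ = 0 := by
  rw [posLog_inv_eq_zero_of_one_le (le_of_not_ge fun h => hr.2 ⟨hr.1, h⟩), mul_zero]

lemma integrableOn_pow_mul_posLog_inv (m : ℕ) :
    IntegrableOn (fun r : ℝ => r ^ m * log⁺ r⁻¹) (Ioi 0) :=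
  ((integrableOn_pow_mul_neg_log m).congr_fun (fun _ hr => by rw [posLog_inv_eq_neg_log hr])
    measurableSet_Ioc).of_forall_sdiff_eq_zero measurableSet_Ioi
    fun _ hr => pow_mul_posLog_inv_eq_zero hr

lemma integral_pow_mul_posLog_inv (m : ℕ) :
    ∫ r in Ioi 0, r ^ m * log⁺ r⁻¹ = 1 / (m + 1) ^ 2 := by
  rw [setIntegral_eq_of_subset_of_forall_sdiff_eq_zero measurableSet_Ioi Ioc_subset_Ioi_self
      fun _ hr => pow_mul_posLog_inv_eq_zero hr,
    setIntegral_congr_fun measurableSet_Ioc fun _ hr => by rw [posLog_inv_eq_neg_log hr],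
    ← intervalIntegral.integral_of_le zero_le_one, integral_pow_mul_neg_log]

section AddHaar

variable {E : Type*} [NormedAddCommGroup E] [NormedSpace ℝ E] [Nontrivial E]
  [FiniteDimensional ℝ E] [MeasurableSpace E] [BorelSpace E]
  (μ : Measure E) [μ.IsAddHaarMeasure]

lemma integrable_posLog_inv_norm : Integrable (fun z : E => log⁺ ‖z‖⁻¹) μ :=
  (integrable_fun_norm_addHaar μ (f := fun r => log⁺ r⁻¹)).2
    (integrableOn_pow_mul_posLog_inv _)

lemma integral_posLog_inv_norm :
    ∫ z, log⁺ ‖z‖⁻¹ ∂μ = μ.real (ball 0 1) / Module.finrank ℝ E := by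
  have hd : (Module.finrank ℝ E - 1 + 1 : ℕ) = Module.finrank ℝ E :=
    Nat.sub_add_cancel Module.finrank_pos
  have hd_ne : (Module.finrank ℝ E : ℝ) ≠ 0 := by exact_mod_cast Module.finrank_pos.ne'
  rw [integral_fun_norm_addHaar μ (fun r => log⁺ r⁻¹)]
  simp only [smul_eq_mul]
  rw [integral_pow_mul_posLog_inv, ← Nat.cast_add_one, hd, nsmul_eq_mul]
  field_simp

lemma integrable_norm_mul_exp_neg_mul_sq_norm {b : ℝ} (hb : 0 < b) :
    Integrable (fun z : E => ‖z‖ * exp (-b * ‖z‖ ^ 2)) μ := by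
  refine (integrable_fun_norm_addHaar μ (f := fun r => r * exp (-b * r ^ 2))).2 ?_
  refine (integrableOn_rpow_mul_exp_neg_mul_sq (s := Module.finrank ℝ E) hb
    (by linarith [(Module.finrank ℝ E).cast_nonneg (α := ℝ)])).congr_fun
    (fun _ _ => ?_) measurableSet_Ioi
  rw [smul_eq_mul, ← mul_assoc, ← pow_succ, Nat.sub_add_cancel Module.finrank_pos, ← rpow_natCast]

end AddHaar

lemma integral_posLog_inv_norm_fin_two :
    ∫ z : EuclideanSpace ℝ (Fin 2), log⁺ ‖z‖⁻¹ = π / 2 := by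
  rw [integral_posLog_inv_norm, measureReal_def, EuclideanSpace.volume_ball_fin_two,
    finrank_euclideanSpace_fin]
  simp [pi_pos.le]

section GaussianDensity

variable {d : ℕ} {t : ℝ}

lemma p_eq_mul_exp (y : EuclideanSpace ℝ (Fin d)) :
    p d t y = (2 * π * t) ^ (-(d : ℝ) / 2) * exp (-(2 * t)⁻¹ * ‖y‖ ^ 2) := by
  unfold p
  congr 2
  ring

lemma p_nonneg (ht : 0 ≤ t) (y : EuclideanSpace ℝ (Fin d)) : 0 ≤ p d t y := by
  rw [p]
  positivity

lemma p_le (ht : 0 ≤ t) (y : EuclideanSpace ℝ (Fin d)) :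
    p d t y ≤ (2 * π * t) ^ (-(d : ℝ) / 2) := by
  rw [p_eq_mul_exp]
  refine mul_le_of_le_one_right (by positivity) (exp_le_one_iff.2 ?_)
  have : 0 ≤ (2 * t)⁻¹ * ‖y‖ ^ 2 := by positivity
  linarith

lemma integral_p (ht : 0 < t) : ∫ y, p d t y = 1 := by
  simp_rw [p_eq_mul_exp, integral_const_mul]
  rw [GaussianFourier.integral_rexp_neg_mul_sq_norm (by positivity), finrank_euclideanSpace_fin,
    div_inv_eq_mul, show π * (2 * t) = 2 * π * t by ring, ← rpow_add (by positivity),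
    neg_div, neg_add_cancel, rpow_zero]

lemma integrable_p (ht : 0 < t) : Integrable (p d t) :=
  .of_integral_ne_zero (by rw [integral_p ht]; exact one_ne_zero)

lemma integrable_p_mul_norm [NeZero d] (ht : 0 < t) :
    Integrable (fun y : EuclideanSpace ℝ (Fin d) => p d t y * ‖y‖) := by
  simp_rw [p_eq_mul_exp, mul_assoc, mul_comm _ ‖_‖]
  exact (integrable_norm_mul_exp_neg_mul_sq_norm volume
    (by positivity : 0 < (2 * t)⁻¹)).const_mul _

end GaussianDensity

theorem abs_log_gaussian_integral_bound_2d (t : ℝ) (ht : 0 < t) :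
    (∀ x : EuclideanSpace ℝ (Fin 2),
      (∫ y : EuclideanSpace ℝ (Fin 2), p 2 t y * |Real.log ‖y - x‖|) ≤
        1 / t + ‖x‖ + ∫ y : EuclideanSpace ℝ (Fin 2), p 2 t y * ‖y‖) ∧
    ∃ C : ℝ, ∀ᶠ x in nhds (0 : EuclideanSpace ℝ (Fin 2)),
      (∫ y : EuclideanSpace ℝ (Fin 2), p 2 t y * |Real.log ‖y - x‖|) ≤ C := by
  have hconst : (2 * π * t) ^ (-((2 : ℕ) : ℝ) / 2) * (π / 2) ≤ 1 / t :=
    calc (2 * π * t) ^ (-((2 : ℕ) : ℝ) / 2) * (π / 2) = 1 / (4 * t) := by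
          rw [show -((2 : ℕ) : ℝ) / 2 = -1 by norm_num, rpow_neg_one]
          field_simp
          ring
      _ ≤ 1 / t := by gcongr; linarith
  have hbound (x : EuclideanSpace ℝ (Fin 2)) :
      ∫ y, p 2 t y * |log ‖y - x‖| ≤ 1 / t + ‖x‖ + ∫ y, p 2 t y * ‖y‖ := by
    refine (integral_mul_abs_log_norm_sub_le (integrable_posLog_inv_norm volume)
      (p_nonneg ht.le) (p_le ht.le) (integrable_p ht) (integrable_p_mul_norm ht) (integral_p ht)
      x).trans ?_
    rw [integral_posLog_inv_norm_fin_two]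
    gcongr
  refine ⟨hbound, 1 / t + 1 + ∫ y, p 2 t y * ‖y‖, ?_⟩
  filter_upwards [closedBall_mem_nhds (0 : EuclideanSpace ℝ (Fin 2)) one_pos] with x hx
  exact (hbound x).trans (by gcongr; exact mem_closedBall_zero_iff.1 hx)
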